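/- Fix a real s > 3/2. The function A ↦ L(A;s) attains a local minimum at A = 1/2; that is, there exists ε > 0 such that L(A;s) ≥ L(1/2;s) for all A with |A − 1/2| < ε and 1/3 ≤ A ≤ 1. -/
import Mathlib


/-- The quadratic form `g(A;i,j,k) = (A(i+j)² + (j+k)² + (i+k)²)/(A+1)`. -/
noncomputable def cuboidalG (A : ℝ) (p : ℤ × ℤ × ℤ) : ℝ :=
  (A * ((p.1 : ℝ) + (p.2.1 : ℝ))^2 + ((p.2.1 : ℝ) + (p.2.2 : ℝ))^2 +
    ((p.1 : ℝ) + (p.2.2 : ℝ))^2) / (A + 1)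

/-- The Epstein zeta function `L(A;s) = Σ'_{(i,j,k)≠(0,0,0)} g(A;i,j,k)^{-s}`. -/
noncomputable def epsteinL (A s : ℝ) : ℝ :=
  ∑' p : {p : ℤ × ℤ × ℤ // p ≠ 0}, (cuboidalG A p.1) ^ (-s)

/-- An order-3 integral automorphism of the bcc quadratic form `cuboidalG (1/2)`. -/
def cubSigma : ℤ × ℤ × ℤ ≃ ℤ × ℤ × ℤ where
  toFun p := (-p.1 - p.2.2, p.2.1 + p.2.2, p.1)
  invFun q := (q.2.2, q.1 + q.2.1 + q.2.2, -q.1 - q.2.2)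
  left_inv p := by
    obtain ⟨i, j, k⟩ := p
    simp only [Prod.mk.injEq, true_and, and_true]
    omega
  right_inv q := by
    obtain ⟨a, b, c⟩ := q
    simp only [Prod.mk.injEq, true_and, and_true]
    omega

lemma cubSigma_ne_zero (p : ℤ × ℤ × ℤ) : cubSigma p ≠ 0 ↔ p ≠ 0 := by
  obtain ⟨i, j, k⟩ := p
  simp only [cubSigma, Equiv.coe_fn_mk, ne_eq, Prod.ext_iff, Prod.fst_zero, Prod.snd_zero]
  omega

/-- The induced permutation of the nonzero lattice points. -/
def cubSigmaE : {p : ℤ × ℤ × ℤ // p ≠ 0} ≃ {p : ℤ × ℤ × ℤ // p ≠ 0} :=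
  cubSigma.subtypeEquiv (fun p => (cubSigma_ne_zero p).symm)

/-- The fundamental averaging identity: the sum of the values of `cuboidalG A` at
`p`, `σ p`, `σ² p` equals `3 · cuboidalG (1/2) p`, for every `A ≠ -1`. -/
lemma cubSigma_key (A : ℝ) (hA : A + 1 ≠ 0) (p : ℤ × ℤ × ℤ) :
    cuboidalG A p + cuboidalG A (cubSigma p) + cuboidalG A (cubSigma (cubSigma p)) =
      3 * cuboidalG (1/2) p := by
  obtain ⟨i, j, k⟩ := p
  simp only [cuboidalG, cubSigma, Equiv.coe_fn_mk]
  push_cast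
  have h32 : (1/2 : ℝ) + 1 ≠ 0 := by norm_num
  field_simp
  ring

lemma cuboidalG_pos {A : ℝ} (hA : 0 < A) {p : ℤ × ℤ × ℤ} (hp : p ≠ 0) :
    0 < cuboidalG A p := by
  obtain ⟨i, j, k⟩ := p
  have hden : (0:ℝ) < A + 1 := by linarith
  apply div_pos _ hden
  have hne : ¬(i + j = 0 ∧ j + k = 0 ∧ i + k = 0) := by
    rintro ⟨h1, h2, h3⟩
    apply hp
    have hi : i = 0 := by omega
    have hj : j = 0 := by omega
    have hk : k = 0 := by omega
    simp [hi, hj, hk, Prod.ext_iff]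
  by_cases h1 : i + j = 0
  · by_cases h2 : j + k = 0
    · have h3 : i + k ≠ 0 := fun h3 => hne ⟨h1, h2, h3⟩
      have h3' : ((i:ℝ) + k) ≠ 0 := by exact_mod_cast fun h => h3 (by exact_mod_cast h)
      have : 0 < ((i:ℝ) + k)^2 := by positivity
      nlinarith [sq_nonneg ((i:ℝ) + j), sq_nonneg ((j:ℝ) + k), hA.le,
        mul_nonneg hA.le (sq_nonneg ((i:ℝ) + j))]
    · have h2' : ((j:ℝ) + k) ≠ 0 := by exact_mod_cast fun h => h2 (by exact_mod_cast h)
      have : 0 < ((j:ℝ) + k)^2 := by positivity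
      nlinarith [sq_nonneg ((i:ℝ) + k), mul_nonneg hA.le (sq_nonneg ((i:ℝ) + j))]
  · have h1' : ((i:ℝ) + j) ≠ 0 := by exact_mod_cast fun h => h1 (by exact_mod_cast h)
    have : 0 < A * ((i:ℝ) + j)^2 := by positivity
    nlinarith [sq_nonneg ((j:ℝ) + k), sq_nonneg ((i:ℝ) + k)]

/-- Jensen's inequality for `t ↦ t^(-s)` at three points with equal weights. -/
lemma jensen3_rpow {a b c s : ℝ} (ha : 0 < a) (hb : 0 < b) (hc : 0 < c) (hs : 0 ≤ s) :
    ((a + b + c)/3) ^ (-s) ≤ (a ^ (-s) + b ^ (-s) + c ^ (-s))/3 := by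
  have hw : (1/3 : ℝ) + 1/3 + 1/3 = 1 := by norm_num
  have w3 : (0:ℝ) ≤ 1/3 := by norm_num
  -- AM-GM: a^(1/3) b^(1/3) c^(1/3) ≤ (a+b+c)/3
  have hgm : a ^ (1/3 : ℝ) * b ^ (1/3 : ℝ) * c ^ (1/3 : ℝ) ≤ (a + b + c)/3 := by
    have := Real.geom_mean_le_arith_mean3_weighted w3 w3 w3 ha.le hb.le hc.le hw
    linarith
  have hprodpos : 0 < a ^ (1/3 : ℝ) * b ^ (1/3 : ℝ) * c ^ (1/3 : ℝ) := by
    positivity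
  have h1 : ((a + b + c)/3) ^ (-s) ≤
      (a ^ (1/3 : ℝ) * b ^ (1/3 : ℝ) * c ^ (1/3 : ℝ)) ^ (-s) :=
    Real.rpow_le_rpow_of_nonpos hprodpos hgm (neg_nonpos.mpr hs)
  have hsw : ∀ x : ℝ, 0 < x → (x ^ (1/3 : ℝ)) ^ (-s) = (x ^ (-s)) ^ (1/3 : ℝ) := by
    intro x hx
    rw [← Real.rpow_mul hx.le, ← Real.rpow_mul hx.le, mul_comm]
  have h2 : (a ^ (1/3 : ℝ) * b ^ (1/3 : ℝ) * c ^ (1/3 : ℝ)) ^ (-s)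
      = (a ^ (-s)) ^ (1/3 : ℝ) * (b ^ (-s)) ^ (1/3 : ℝ) * (c ^ (-s)) ^ (1/3 : ℝ) := by
    rw [Real.mul_rpow (by positivity) (by positivity),
      Real.mul_rpow (by positivity) (by positivity), hsw a ha, hsw b hb, hsw c hc]
  have hgm2 : (a ^ (-s)) ^ (1/3 : ℝ) * (b ^ (-s)) ^ (1/3 : ℝ) * (c ^ (-s)) ^ (1/3 : ℝ)
      ≤ (a ^ (-s) + b ^ (-s) + c ^ (-s))/3 := by
    have := Real.geom_mean_le_arith_mean3_weighted (p₁ := a ^ (-s)) (p₂ := b ^ (-s))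
      (p₃ := c ^ (-s)) w3 w3 w3
      (Real.rpow_nonneg ha.le _) (Real.rpow_nonneg hb.le _) (Real.rpow_nonneg hc.le _) hw
    linarith
  calc ((a + b + c)/3) ^ (-s) ≤ _ := h1
    _ = _ := h2
    _ ≤ _ := hgm2

lemma summable_base {s : ℝ} (hs : 3/2 < s) :
    Summable (fun m : ℤ => ((1:ℝ) + (m:ℝ)^2) ^ (-(s/3))) := by
  set t := s/3 with ht
  have ht0 : 0 < t := by rw [ht]; linarith
  have h2t : 1 < 2*t := by rw [ht]; linarith
  -- summability over ℕ of (n+1)^(-2t)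
  have hnat : Summable (fun n : ℕ => ((n:ℝ)+1) ^ (-(2*t))) := by
    have h0 : Summable (fun n : ℕ => ((n:ℝ)) ^ (-(2*t))) :=
      Real.summable_nat_rpow.mpr (by linarith)
    have h1 : Summable ((fun n : ℕ => ((n:ℝ)) ^ (-(2*t))) ∘ (fun n : ℕ => n + 1)) :=
      h0.comp_injective (fun a b h => by omega)
    refine h1.congr fun n => ?_
    simp only [Function.comp_apply]
    push_cast
    rfl
  have hint : Summable (fun m : ℤ => ((m.natAbs : ℝ)+1) ^ (-(2*t))) := by
    refine Summable.of_nat_of_neg ?_ ?_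
    · refine hnat.congr fun n => ?_
      simp
    · refine hnat.congr fun n => ?_
      simp
  refine ((hint.mul_left ((2:ℝ) ^ t)).of_nonneg_of_le
    (fun m => Real.rpow_nonneg (by positivity) _) (fun m => ?_))
  -- the comparison
  have habs : ((m.natAbs : ℝ)) = |(m:ℝ)| := by
    rw [Nat.cast_natAbs]
    push_cast
    rfl
  have hx0 : (0:ℝ) < (m.natAbs : ℝ) + 1 := by positivity
  have hsq : ((m.natAbs : ℝ) + 1)^2 ≤ 2 * ((1:ℝ) + (m:ℝ)^2) := by
    have h1 : |(m:ℝ)| ^ 2 = (m:ℝ)^2 := sq_abs _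
    have h2 : (|(m:ℝ)| - 1)^2 ≥ 0 := sq_nonneg _
    rw [habs]
    nlinarith [abs_nonneg (m:ℝ)]
  have hlow : ((m.natAbs : ℝ) + 1)^2 / 2 ≤ (1:ℝ) + (m:ℝ)^2 := by linarith
  have step1 : ((1:ℝ) + (m:ℝ)^2) ^ (-t) ≤ (((m.natAbs : ℝ) + 1)^2/2) ^ (-t) :=
    Real.rpow_le_rpow_of_nonpos (by positivity) hlow (by linarith)
  have hxx : ((((m.natAbs : ℝ) + 1)^2 : ℝ)) ^ (-t) = ((m.natAbs : ℝ) + 1) ^ (-(2*t)) := by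
    rw [← Real.rpow_natCast ((m.natAbs : ℝ) + 1) 2, ← Real.rpow_mul hx0.le]
    congr 1
    push_cast
    ring
  have step2 : ((((m.natAbs : ℝ) + 1)^2/2) : ℝ) ^ (-t) =
      (2:ℝ)^t * ((m.natAbs : ℝ) + 1) ^ (-(2*t)) := by
    rw [Real.div_rpow (by positivity) (by norm_num), hxx,
      Real.rpow_neg (by norm_num : (0:ℝ) ≤ 2), div_eq_mul_inv, inv_inv, mul_comm]
  calc ((1:ℝ) + (m:ℝ)^2) ^ (-t) ≤ (((m.natAbs : ℝ) + 1)^2/2) ^ (-t) := step1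
    _ = (2:ℝ)^t * ((m.natAbs : ℝ) + 1) ^ (-(2*t)) := step2

set_option maxHeartbeats 1000000 in
lemma summable_aux {s : ℝ} (hs : 3/2 < s) {A : ℝ} (hA1 : 1/3 ≤ A) (hA2 : A ≤ 1) :
    Summable (fun p : {p : ℤ × ℤ × ℤ // p ≠ 0} => cuboidalG A p.1 ^ (-s)) := by
  set t := s/3 with ht
  have hs0 : 0 < s := by linarith
  have ht0 : 0 < t := by rw [ht]; linarith
  set f : ℤ → ℝ := fun m => ((1:ℝ) + (m:ℝ)^2) ^ (-t) with hf
  have hfnn : ∀ m, 0 ≤ f m := fun m => Real.rpow_nonneg (by positivity) _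
  have hfs : Summable f := summable_base hs
  have hP : Summable (fun p : ℤ × ℤ × ℤ => f p.1 * (f p.2.1 * f p.2.2)) :=
    hfs.mul_of_nonneg (hfs.mul_of_nonneg hfs hfnn hfnn)
      hfnn (fun q => mul_nonneg (hfnn _) (hfnn _))
  have hPsub : Summable (fun p : {p : ℤ × ℤ × ℤ // p ≠ 0} =>
      f p.1.1 * (f p.1.2.1 * f p.1.2.2)) := hP.subtype _
  set C : ℝ := (6:ℝ)^s * (8:ℝ)^t with hC
  refine ((hPsub.mul_left C).of_nonneg_of_le (fun p => ?_) (fun p => ?_))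
  · exact Real.rpow_nonneg (le_of_lt (cuboidalG_pos (by linarith) p.2)) _
  · obtain ⟨⟨i, j, k⟩, hp⟩ := p
    have hApos : (0:ℝ) < A := by linarith
    set n : ℝ := (i:ℝ)^2 + (j:ℝ)^2 + (k:ℝ)^2 with hn
    have hsq1 : ∀ a : ℤ, a ≠ 0 → (1:ℤ) ≤ a^2 := by
      intro a ha
      have h1 : 1 ≤ |a| := Int.one_le_abs ha
      nlinarith [sq_abs a]
    have hn1 : (1:ℝ) ≤ n := by
      have hne : ¬(i = 0 ∧ j = 0 ∧ k = 0) := by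
        simpa [Prod.mk_eq_zero] using hp
      have : (1:ℤ) ≤ i^2 + j^2 + k^2 := by
        by_cases hi : i = 0
        · by_cases hj : j = 0
          · have hk : k ≠ 0 := fun hk => hne ⟨hi, hj, hk⟩
            linarith [hsq1 k hk, sq_nonneg i, sq_nonneg j]
          · linarith [hsq1 j hj, sq_nonneg i, sq_nonneg k]
        · linarith [hsq1 i hi, sq_nonneg j, sq_nonneg k]
      rw [hn]
      exact_mod_cast this
    have hn0 : (0:ℝ) < n := by linarith
    -- lower bound on the form
    have hglow : n/6 ≤ cuboidalG A (i, j, k) := by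
      rw [cuboidalG]
      rw [div_le_div_iff₀ (by norm_num) (by linarith)]
      have hxy : n ≤ ((i:ℝ)+j)^2 + ((j:ℝ)+k)^2 + ((i:ℝ)+k)^2 := by
        nlinarith [sq_nonneg ((i:ℝ) + j + k)]
      nlinarith [sq_nonneg ((i:ℝ)+j), sq_nonneg ((j:ℝ)+k), sq_nonneg ((i:ℝ)+k),
        mul_nonneg (by linarith : (0:ℝ) ≤ A - 1/3) (sq_nonneg ((i:ℝ)+j))]
    have hgpos : 0 < cuboidalG A (i, j, k) := cuboidalG_pos hApos hp
    have step1 : cuboidalG A (i, j, k) ^ (-s) ≤ (n/6) ^ (-s) :=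
      Real.rpow_le_rpow_of_nonpos (by positivity) hglow (by linarith)
    have step2 : (n/6 : ℝ) ^ (-s) = (6:ℝ)^s * n ^ (-s) := by
      rw [Real.div_rpow (by positivity) (by norm_num), Real.rpow_neg (by norm_num : (0:ℝ) ≤ 6),
        div_eq_mul_inv, inv_inv, mul_comm]
    -- separable bound on n^(-s)
    have hprod_le : ((1:ℝ)+(i:ℝ)^2) * (((1:ℝ)+(j:ℝ)^2) * ((1:ℝ)+(k:ℝ)^2)) ≤ 8 * n^3 := by
      have hi2 : (1:ℝ)+(i:ℝ)^2 ≤ 2*n := by nlinarith [sq_nonneg (j:ℝ), sq_nonneg (k:ℝ)]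
      have hj2 : (1:ℝ)+(j:ℝ)^2 ≤ 2*n := by nlinarith [sq_nonneg (i:ℝ), sq_nonneg (k:ℝ)]
      have hk2 : (1:ℝ)+(k:ℝ)^2 ≤ 2*n := by nlinarith [sq_nonneg (i:ℝ), sq_nonneg (j:ℝ)]
      calc ((1:ℝ)+(i:ℝ)^2) * (((1:ℝ)+(j:ℝ)^2) * ((1:ℝ)+(k:ℝ)^2))
          ≤ (2*n) * ((2*n) * (2*n)) := by
            refine mul_le_mul hi2 ?_ (by positivity) (by positivity)
            exact mul_le_mul hj2 hk2 (by positivity) (by positivity)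
        _ = 8 * n^3 := by ring
    have h8n : ((8:ℝ) * n^3) ^ (-t) = (8:ℝ)^(-t) * n^(-s) := by
      rw [Real.mul_rpow (by norm_num) (by positivity)]
      congr 1
      rw [← Real.rpow_natCast n 3, ← Real.rpow_mul hn0.le]
      congr 1
      rw [ht]
      push_cast
      ring
    have hsep : ((8:ℝ) * n^3) ^ (-t) ≤
        (((1:ℝ)+(i:ℝ)^2) * (((1:ℝ)+(j:ℝ)^2) * ((1:ℝ)+(k:ℝ)^2))) ^ (-t) :=
      Real.rpow_le_rpow_of_nonpos (by positivity) hprod_le (by linarith)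
    have hsplit : (((1:ℝ)+(i:ℝ)^2) * (((1:ℝ)+(j:ℝ)^2) * ((1:ℝ)+(k:ℝ)^2))) ^ (-t)
        = f i * (f j * f k) := by
      rw [Real.mul_rpow (by positivity) (by positivity),
        Real.mul_rpow (by positivity) (by positivity)]
    have hns : n^(-s) ≤ (8:ℝ)^t * (f i * (f j * f k)) := by
      have h88 : (8:ℝ)^t * (8:ℝ)^(-t) = 1 := by
        rw [← Real.rpow_add (by norm_num : (0:ℝ) < 8)]
        simp
      have := mul_le_mul_of_nonneg_left (hsplit ▸ hsep) (by positivity : (0:ℝ) ≤ (8:ℝ)^t)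
      calc n^(-s) = (8:ℝ)^t * (((8:ℝ) * n^3) ^ (-t)) := by
            rw [h8n, ← mul_assoc, h88, one_mul]
        _ ≤ (8:ℝ)^t * (f i * (f j * f k)) := this
    calc cuboidalG A (i, j, k) ^ (-s) ≤ (n/6) ^ (-s) := step1
      _ = (6:ℝ)^s * n ^ (-s) := step2
      _ ≤ (6:ℝ)^s * ((8:ℝ)^t * (f i * (f j * f k))) := by
          exact mul_le_mul_of_nonneg_left hns (by positivity)
      _ = C * (f i * (f j * f k)) := by rw [hC]; ring

set_option maxHeartbeats 2000000 in
/-- For fixed real `s > 3/2`, the function `A ↦ L(A;s)` attains a local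
minimum at `A = 1/2`: there is `ε > 0` with `L(A;s) ≥ L(1/2;s)` whenever
`|A − 1/2| < ε` and `1/3 ≤ A ≤ 1`. -/
theorem epsteinL_localMin_at_half (s : ℝ) (hs : s > 3/2) :
    ∃ ε > (0 : ℝ), ∀ A : ℝ, |A - 1/2| < ε → 1/3 ≤ A → A ≤ 1 →
      epsteinL (1/2) s ≤ epsteinL A s := by
  refine ⟨1, one_pos, fun A _ hA1 hA2 => ?_⟩
  have hApos : (0:ℝ) < A := by linarith
  have hAne : A + 1 ≠ 0 := by linarith
  have hs0 : (0:ℝ) ≤ s := by linarith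
  set F : {p : ℤ × ℤ × ℤ // p ≠ 0} → ℝ := fun p => cuboidalG A p.1 ^ (-s) with hF
  set G : {p : ℤ × ℤ × ℤ // p ≠ 0} → ℝ := fun p => cuboidalG (1/2) p.1 ^ (-s) with hG
  have hSF : Summable F := summable_aux hs hA1 hA2
  have hSG : Summable G := summable_aux hs (by norm_num) (by norm_num)
  have hSF1 : Summable (fun p => F (cubSigmaE p)) := cubSigmaE.summable_iff.mpr hSF
  have hSF2 : Summable (fun p => F (cubSigmaE (cubSigmaE p))) :=
    (cubSigmaE.trans cubSigmaE).summable_iff.mpr hSF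
  have hptwise : ∀ p : {p : ℤ × ℤ × ℤ // p ≠ 0},
      G p ≤ (1/3) * (F p + F (cubSigmaE p) + F (cubSigmaE (cubSigmaE p))) := by
    intro p
    have hp1 : cubSigma p.1 ≠ 0 := (cubSigma_ne_zero p.1).mpr p.2
    have hp2 : cubSigma (cubSigma p.1) ≠ 0 := (cubSigma_ne_zero _).mpr hp1
    have ha : 0 < cuboidalG A p.1 := cuboidalG_pos hApos p.2
    have hb : 0 < cuboidalG A (cubSigma p.1) := cuboidalG_pos hApos hp1
    have hc : 0 < cuboidalG A (cubSigma (cubSigma p.1)) := cuboidalG_pos hApos hp2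
    have hkey : (cuboidalG A p.1 + cuboidalG A (cubSigma p.1) +
        cuboidalG A (cubSigma (cubSigma p.1)))/3 = cuboidalG (1/2) p.1 := by
      rw [cubSigma_key A hAne p.1]
      ring
    have := jensen3_rpow ha hb hc hs0
    rw [hkey] at this
    show cuboidalG (1/2) p.1 ^ (-s) ≤
      1/3 * (cuboidalG A p.1 ^ (-s) + cuboidalG A (cubSigma p.1) ^ (-s) +
        cuboidalG A (cubSigma (cubSigma p.1)) ^ (-s))
    linarith
  have hSrhs : Summable (fun p => (1/3) *
      (F p + F (cubSigmaE p) + F (cubSigmaE (cubSigmaE p)))) :=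
    ((hSF.add hSF1).add hSF2).mul_left _
  have hT1 : ∑' p, F (cubSigmaE p) = ∑' p, F p := cubSigmaE.tsum_eq F
  have hT2 : ∑' p, F (cubSigmaE (cubSigmaE p)) = ∑' p, F p :=
    (cubSigmaE.trans cubSigmaE).tsum_eq F
  have hmain : epsteinL (1/2) s ≤
      ∑' p, (1/3) * (F p + F (cubSigmaE p) + F (cubSigmaE (cubSigmaE p))) :=
    Summable.tsum_le_tsum hptwise hSG hSrhs
  calc epsteinL (1/2) s ≤
      ∑' p, (1/3) * (F p + F (cubSigmaE p) + F (cubSigmaE (cubSigmaE p))) := hmain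
    _ = (1/3) * ((∑' p, F p) + (∑' p, F (cubSigmaE p)) +
        (∑' p, F (cubSigmaE (cubSigmaE p)))) := by
        rw [tsum_mul_left, Summable.tsum_add (hSF.add hSF1) hSF2, Summable.tsum_add hSF hSF1]
    _ = epsteinL A s := by
        rw [hT1, hT2, epsteinL]
        ring
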